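/- Main Convergence Law: let q > p > 1 be real and define the bias-corrected estimator B_n^{(p,q)} = ζ(p)^{q/p} − D_n^{(p,q)} − (q/p) ζ(p)^{q/p − 1} (ζ(p) − S_n^{(p)}). Then B_n^{(p,q)} − ζ(q) = O(n^{-min(2p−2, q−1)}) as n → ∞; that is, there exist C > 0 and N such that |B_n^{(p,q)} − ζ(q)| ≤ C n^{-min(2p−2, q−1)} for all n ≥ N. -/

import Mathlib

open Filter Finset

/-- Partial sum `S_n^{(p)} = ∑_{k=1}^n k^{-p}`. -/
noncomputable def S (p : ℝ) (n : ℕ) : ℝ := ∑ k ∈ Finset.range n, ((k : ℝ) + 1) ^ (-p)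

/-- `ζ(s) = ∑_{k=1}^∞ k^{-s}` (as a tsum). -/
noncomputable def zetaR (s : ℝ) : ℝ := ∑' k : ℕ, ((k : ℝ) + 1) ^ (-s)

/-- Finite deficiency `D_n^{(p,q)} = (S_n^{(p)})^{q/p} - T_n^{(q)}`. -/
noncomputable def D (p q : ℝ) (n : ℕ) : ℝ := (S p n) ^ (q / p) - S q n

/-!
Write `x = S_n^{(p)}`, `a = ζ(p)` and `α = q/p`. Then `B_n^{(p,q)} - ζ(q)` is the first-order Taylor
remainder `a^α - x^α - α a^(α-1) (a - x)` minus the tail `ζ(q) - T_n^{(q)}`. Since `1 ≤ x ≤ a`, the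
second derivative of `y ↦ y^α` is bounded on `[x, a]`, so the remainder is `O((a - x)^2)`; and the
tail of `∑ k^{-s}` after `n` terms is at most `n^(1-s)/(s-1)`, which telescopes from
`(s-1) (b+1)^(-s) ≤ b^(1-s) - (b+1)^(1-s)`. Hence the error is
`O(n^(-(2p-2))) + O(n^(-(q-1)))`.
-/

open Set

theorem abs_sub_sub_deriv_mul_sub_le {f f' f'' : ℝ → ℝ} {x a M : ℝ} (hxa : x ≤ a)
    (hf : ∀ z ∈ Icc x a, HasDerivWithinAt f (f' z) (Icc x a) z)
    (hf' : ∀ z ∈ Icc x a, HasDerivWithinAt f' (f'' z) (Icc x a) z)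
    (hf'' : ∀ z ∈ Icc x a, |f'' z| ≤ M) :
    |f a - f x - f' a * (a - x)| ≤ M * (a - x) ^ 2 := by
  have hM : 0 ≤ M := (abs_nonneg _).trans (hf'' a (right_mem_Icc.2 hxa))
  have hf'_near : ∀ y ∈ Icc x a, ‖f' y - f' a‖ ≤ M * (a - x) := fun y hy => by
    have := (convex_Icc x a).norm_image_sub_le_of_norm_hasDerivWithin_le hf' hf''
      (right_mem_Icc.2 hxa) hy
    refine this.trans ?_
    rw [Real.norm_eq_abs, abs_sub_comm, abs_of_nonneg (sub_nonneg.2 hy.2)]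
    gcongr
    exact hy.1
  have hg : ∀ z ∈ Icc x a,
      HasDerivWithinAt (fun w => f w - f' a * w) (f' z - f' a) (Icc x a) z := fun z hz =>
    (hf z hz).sub (by simpa using (hasDerivWithinAt_id z _).const_mul (f' a))
  have := (convex_Icc x a).norm_image_sub_le_of_norm_hasDerivWithin_le hg hf'_near
    (left_mem_Icc.2 hxa) (right_mem_Icc.2 hxa)
  rw [Real.norm_eq_abs, Real.norm_eq_abs, abs_of_nonneg (sub_nonneg.2 hxa)] at this
  calc |f a - f x - f' a * (a - x)| = |f a - f' a * a - (f x - f' a * x)| := by ring_nf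
    _ ≤ M * (a - x) * (a - x) := this
    _ = M * (a - x) ^ 2 := by ring

theorem rpow_le_one_add_rpow {z a : ℝ} (r : ℝ) (hz : 1 ≤ z) (hza : z ≤ a) :
    z ^ r ≤ 1 + a ^ r := by
  have ha : 0 ≤ a ^ r := Real.rpow_nonneg (by linarith) r
  rcases le_total 0 r with hr | hr
  · linarith [Real.rpow_le_rpow (by linarith) hza hr]
  · linarith [Real.rpow_le_one_of_one_le_of_nonpos hz hr]

theorem abs_rpow_sub_rpow_sub_mul_le (α : ℝ) {x a : ℝ} (hx : 1 ≤ x) (hxa : x ≤ a) :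
    |a ^ α - x ^ α - α * a ^ (α - 1) * (a - x)| ≤
      |α * (α - 1)| * (1 + a ^ (α - 2)) * (a - x) ^ 2 := by
  have hpos : ∀ z ∈ Icc x a, z ≠ 0 := fun z hz => by linarith [hz.1]
  refine abs_sub_sub_deriv_mul_sub_le (f' := fun z => α * z ^ (α - 1))
    (f'' := fun z => α * (α - 1) * z ^ (α - 2)) hxa
    (fun z hz => (Real.hasDerivAt_rpow_const (Or.inl (hpos z hz))).hasDerivWithinAt)
    (fun z hz => ?_) (fun z hz => ?_)
  · have := ((Real.hasDerivAt_rpow_const (p := α - 1) (Or.inl (hpos z hz))).const_mul α)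
    rw [show α - 1 - 1 = α - 2 by ring, ← mul_assoc] at this
    exact this.hasDerivWithinAt
  · have hz0 : 0 < z := by linarith [hz.1]
    rw [abs_mul, abs_of_pos (Real.rpow_pos_of_pos hz0 _)]
    gcongr
    exact rpow_le_one_add_rpow _ (hx.trans hz.1) hz.2

theorem sub_one_mul_rpow_neg_le {s b : ℝ} (hs : 1 ≤ s) (hb : 0 < b) :
    (s - 1) * (b + 1) ^ (-s) ≤ b ^ (1 - s) - (b + 1) ^ (1 - s) := by
  have hb1 : 0 < b + 1 := by linarith
  have bernoulli : 1 + s * b⁻¹ ≤ (1 + b⁻¹) ^ s :=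
    one_add_mul_self_le_rpow_one_add (by linarith [inv_pos.2 hb]) hs
  have hb_rpow : b ^ (1 - s) = (1 + b⁻¹) ^ s * b * (b + 1) ^ (-s) := by
    rw [show 1 + b⁻¹ = (b + 1) / b by field_simp, Real.div_rpow hb1.le hb.le,
      Real.rpow_sub hb, Real.rpow_neg hb1.le, Real.rpow_one]
    field_simp
  have hb1_rpow : (b + 1) ^ (1 - s) = (b + 1) * (b + 1) ^ (-s) := by
    rw [sub_eq_add_neg, Real.rpow_add hb1, Real.rpow_one]
  have hpos : 0 < b * (b + 1) ^ (-s) := mul_pos hb (Real.rpow_pos_of_pos hb1 _)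
  have := mul_le_mul_of_nonneg_right bernoulli hpos.le
  rw [hb_rpow, hb1_rpow]
  calc (s - 1) * (b + 1) ^ (-s)
        = (1 + s * b⁻¹) * (b * (b + 1) ^ (-s)) - (b + 1) * (b + 1) ^ (-s) := by
          field_simp; ring
    _ ≤ _ := by linarith

theorem summable_natCast_add_one_rpow_neg {s : ℝ} (hs : 1 < s) :
    Summable fun k : ℕ => ((k : ℝ) + 1) ^ (-s) := by
  refine ((Real.summable_one_div_nat_add_rpow 1 s).2 hs).congr fun k => ?_
  rw [abs_of_pos (by positivity), Real.rpow_neg (by positivity), one_div]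

theorem S_le_zetaR {s : ℝ} (hs : 1 < s) (n : ℕ) : S s n ≤ zetaR s :=
  (summable_natCast_add_one_rpow_neg hs).sum_le_tsum _ fun k _ => by positivity

theorem one_le_S (p : ℝ) {n : ℕ} (hn : 0 < n) : 1 ≤ S p n := by
  have := Finset.single_le_sum (f := fun k : ℕ => ((k : ℝ) + 1) ^ (-p))
    (fun k _ => by positivity) (Finset.mem_range.2 hn)
  simpa [S] using this

theorem zetaR_sub_S_le {s : ℝ} (hs : 1 < s) {n : ℕ} (hn : 0 < n) :
    zetaR s - S s n ≤ (n : ℝ) ^ (1 - s) / (s - 1) := by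
  have htail : zetaR s - S s n = ∑' k : ℕ, (((k + n : ℕ) : ℝ) + 1) ^ (-s) := by
    rw [zetaR, S, ← (summable_natCast_add_one_rpow_neg hs).sum_add_tsum_nat_add n,
      add_sub_cancel_left]
  set h : ℕ → ℝ := fun i => ((i + n : ℕ) : ℝ) ^ (1 - s) / (s - 1)
  have hstep : ∀ i, (((i + n : ℕ) : ℝ) + 1) ^ (-s) ≤ h i - h (i + 1) := fun i => by
    have hcast : ((i + 1 + n : ℕ) : ℝ) = ((i + n : ℕ) : ℝ) + 1 := by push_cast; ring
    simp only [h]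
    rw [← sub_div, le_div_iff₀ (by linarith), mul_comm, hcast]
    exact sub_one_mul_rpow_neg_le hs.le (by positivity)
  rw [htail]
  refine Real.tsum_le_of_sum_range_le (fun k => by positivity) fun m => ?_
  calc ∑ i ∈ range m, (((i + n : ℕ) : ℝ) + 1) ^ (-s)
      ≤ ∑ i ∈ range m, (h i - h (i + 1)) := sum_le_sum fun i _ => hstep i
    _ = h 0 - h m := sum_range_sub' h m
    _ ≤ h 0 := sub_le_self _ (div_nonneg (by positivity) (by linarith))
    _ = (n : ℝ) ^ (1 - s) / (s - 1) := by simp [h]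

theorem stmt13 (p q : ℝ) (hp : 1 < p) (hpq : p < q) :
    ∃ C > (0 : ℝ), ∃ N : ℕ, ∀ n ≥ N,
      |(zetaR p ^ (q / p) - D p q n -
        (q / p) * zetaR p ^ (q / p - 1) * (zetaR p - S p n)) - zetaR q| ≤
        C * (n : ℝ) ^ (-(min (2 * p - 2) (q - 1))) := by
  have hq : 1 < q := hp.trans hpq
  simp only [D]
  set α := q / p
  set a := zetaR p
  set M := |α * (α - 1)| * (1 + a ^ (α - 2))
  have ha : 0 < a := zero_lt_one.trans_le ((one_le_S p one_pos).trans (S_le_zetaR hp 1))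
  refine ⟨M / (p - 1) ^ 2 + 1 / (q - 1),
    add_pos_of_nonneg_of_pos (by positivity) (one_div_pos.2 (by linarith)), 1, fun n hn => ?_⟩
  set m := min (2 * p - 2) (q - 1)
  have hn1 : (1 : ℝ) ≤ n := by exact_mod_cast hn
  have taylor := abs_rpow_sub_rpow_sub_mul_le α (one_le_S p hn) (S_le_zetaR hp n)
  have hr := zetaR_sub_S_le hp hn
  have hr0 := sub_nonneg.2 (S_le_zetaR hp n)
  have ht := zetaR_sub_S_le hq hn
  have ht0 := sub_nonneg.2 (S_le_zetaR hq n)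
  calc _ = |(a ^ α - S p n ^ α - α * a ^ (α - 1) * (a - S p n)) - (zetaR q - S q n)| := by
        congr 1; ring
    _ ≤ M * (a - S p n) ^ 2 + (zetaR q - S q n) :=
        (abs_sub _ _).trans (add_le_add taylor (abs_of_nonneg ht0).le)
    _ ≤ M * ((n : ℝ) ^ (1 - p) / (p - 1)) ^ 2 + (n : ℝ) ^ (1 - q) / (q - 1) := by gcongr
    _ = M / (p - 1) ^ 2 * (n : ℝ) ^ (-(2 * p - 2)) + 1 / (q - 1) * (n : ℝ) ^ (-(q - 1)) := by
        rw [div_pow, ← Real.rpow_mul_natCast (by positivity)]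
        ring_nf
    _ ≤ M / (p - 1) ^ 2 * (n : ℝ) ^ (-m) + 1 / (q - 1) * (n : ℝ) ^ (-m) := by
        gcongr
        exacts [min_le_left _ _, min_le_right _ _]
    _ = (M / (p - 1) ^ 2 + 1 / (q - 1)) * (n : ℝ) ^ (-m) := by ring
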